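/- Fix ξ ∈ ℝ. For every pair of smooth real-valued functions u, v : [0,∞) → ℝ which, together with all their derivatives, decay faster than any polynomial at infinity, one has ∫₀^∞ (C_ξ u)(t) v(t) dt = ∫₀^∞ u(t) (C_ξ v)(t) dt; that is, the operator C_ξ is symmetric on Schwartz functions on the half-line (no boundary conditions are required). -/

import Mathlib

/-!
The second-order part of `C_ξ` is in divergence form, `-2 t w'' - 2 w' = -2 (t w')'`, and its
zeroth-order coefficient is a polynomial, so `C_ξ` is a formally self-adjoint Sturm–Liouville
operator with leading coefficient `2t`. The Lagrange identity
`(C_ξ u) v - u (C_ξ v) = (2 t W(u, v))'`, with `W(u, v) = u v' - u' v` the Wronskian, then reduces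
the symmetry to the vanishing of the boundary term `2 t W(u, v)` at both ends: at `0` because of
the factor `t`, and at `∞` because `u`, `v` and their derivatives decay rapidly.
-/

open MeasureTheory

/-- The operator `C_ξ w = 2( t·(n₀w) − ξw − w' + t²(ξ−t)w )`, where
`(n₀w)(t) = −w''(t) + ((ξ−t)² + 1)w(t)`. -/
noncomputable def Cxi (ξ : ℝ) (w : ℝ → ℝ) (t : ℝ) : ℝ :=
  2 * (t * (-(deriv (deriv w) t) + ((ξ - t) ^ 2 + 1) * w t)
    - ξ * w t - deriv w t + t ^ 2 * (ξ - t) * w t)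

open Filter Set Asymptotics Topology

def RapidDecay (f : ℝ → ℝ) : Prop :=
  ∀ k : ℕ, ∃ C : ℝ, ∀ t : ℝ, 0 ≤ t → |t| ^ k * |f t| ≤ C

namespace RapidDecay

variable {f g : ℝ → ℝ}

lemma add (hf : RapidDecay f) (hg : RapidDecay g) : RapidDecay fun t => f t + g t := by
  intro k
  obtain ⟨C, hC⟩ := hf k
  obtain ⟨D, hD⟩ := hg k
  refine ⟨C + D, fun t ht => ?_⟩
  calc |t| ^ k * |f t + g t| ≤ |t| ^ k * |f t| + |t| ^ k * |g t| := by
        rw [← mul_add]; gcongr; exact abs_add_le _ _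
    _ ≤ C + D := add_le_add (hC t ht) (hD t ht)

lemma const_mul (c : ℝ) (hf : RapidDecay f) : RapidDecay fun t => c * f t := by
  intro k
  obtain ⟨C, hC⟩ := hf k
  refine ⟨|c| * C, fun t ht => ?_⟩
  calc |t| ^ k * |c * f t| = |c| * (|t| ^ k * |f t|) := by rw [abs_mul]; ring
    _ ≤ |c| * C := by gcongr; exact hC t ht

lemma sub (hf : RapidDecay f) (hg : RapidDecay g) : RapidDecay fun t => f t - g t := by
  simpa only [sub_eq_add_neg, neg_one_mul] using hf.add (hg.const_mul (-1))

lemma id_mul (hf : RapidDecay f) : RapidDecay fun t => t * f t := by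
  intro k
  obtain ⟨C, hC⟩ := hf (k + 1)
  exact ⟨C, fun t ht => by simpa only [abs_mul, pow_succ, mul_assoc] using hC t ht⟩

lemma mul (hf : RapidDecay f) (hg : RapidDecay g) : RapidDecay fun t => f t * g t := by
  intro k
  obtain ⟨C, hC⟩ := hf k
  obtain ⟨D, hD⟩ := hg 0
  simp only [pow_zero, one_mul] at hD
  refine ⟨C * D, fun t ht => ?_⟩
  calc |t| ^ k * |f t * g t| = (|t| ^ k * |f t|) * |g t| := by rw [abs_mul]; ring
    _ ≤ C * D := mul_le_mul (hC t ht) (hD t ht) (abs_nonneg _)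
      ((hC t ht).trans' (by positivity))

lemma isBigO_rpow_neg (hf : RapidDecay f) (k : ℕ) : f =O[atTop] fun t => t ^ (-(k : ℝ)) := by
  obtain ⟨C, hC⟩ := hf k
  refine IsBigO.of_bound C ?_
  filter_upwards [eventually_gt_atTop 0] with t ht
  rw [Real.norm_eq_abs, Real.norm_of_nonneg (by positivity), Real.rpow_neg ht.le,
    Real.rpow_natCast, ← div_eq_mul_inv, le_div_iff₀' (by positivity)]
  simpa only [abs_of_pos ht] using hC t ht.le

lemma tendsto_atTop_zero (hf : RapidDecay f) : Tendsto f atTop (𝓝 0) :=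
  (hf.isBigO_rpow_neg 1).trans_tendsto (tendsto_rpow_neg_atTop (by norm_num))

lemma integrableOn_Ioi (hf : RapidDecay f) (hc : Continuous f) : IntegrableOn f (Ioi 0) := by
  refine (integrableOn_Ici_iff_integrableAtFilter_atTop.mpr ⟨?_, ?_⟩).mono_set Ioi_subset_Ici_self
  · exact (hf.isBigO_rpow_neg 2).integrableAtFilter
      hc.aestronglyMeasurable.stronglyMeasurableAtFilter
      (integrableAtFilter_rpow_atTop_iff.mpr (by norm_num))
  · exact hc.locallyIntegrable.locallyIntegrableOn _

end RapidDecay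

noncomputable def wronskian (u v : ℝ → ℝ) (t : ℝ) : ℝ :=
  u t * deriv v t - deriv u t * v t

section

variable {u v w : ℝ → ℝ}

lemma hasDerivAt_wronskian (hu : ContDiff ℝ 2 u) (hv : ContDiff ℝ 2 v) (t : ℝ) :
    HasDerivAt (wronskian u v) (u t * deriv (deriv v) t - deriv (deriv u) t * v t) t := by
  have hu' := (hu.differentiable two_ne_zero t).hasDerivAt
  have hv' := (hv.differentiable two_ne_zero t).hasDerivAt
  have hu'' := (hu.differentiable_deriv_two t).hasDerivAt
  have hv'' := (hv.differentiable_deriv_two t).hasDerivAt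
  refine ((hu'.mul hv'').sub (hu''.mul hv')).congr_deriv ?_
  ring

lemma Cxi_lagrange_identity (ξ : ℝ) (hu : ContDiff ℝ 2 u) (hv : ContDiff ℝ 2 v) (t : ℝ) :
    HasDerivAt (fun s => 2 * (s * wronskian u v s)) (Cxi ξ u t * v t - u t * Cxi ξ v t) t := by
  refine (((hasDerivAt_id' t).mul (hasDerivAt_wronskian hu hv t)).const_mul 2).congr_deriv ?_
  simp only [Cxi, wronskian]
  ring

lemma continuous_Cxi (ξ : ℝ) (hw : ContDiff ℝ 2 w) : Continuous (Cxi ξ w) := by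
  have := hw.continuous
  have := hw.continuous_deriv one_le_two
  have := hw.deriv'.continuous_deriv_one
  unfold Cxi
  fun_prop

lemma rapidDecay_Cxi (ξ : ℝ) (h0 : RapidDecay w) (h1 : RapidDecay (deriv w))
    (h2 : RapidDecay (deriv (deriv w))) : RapidDecay (Cxi ξ w) := by
  have hCxi : Cxi ξ w = fun t => 2 * ((ξ ^ 2 + 1) * (t * w t) - ξ * (t * (t * w t))
      - ξ * w t - deriv w t - t * deriv (deriv w) t) := by
    funext t
    simp only [Cxi]
    ring
  rw [hCxi]
  exact ((((h0.id_mul.const_mul _).sub (h0.id_mul.id_mul.const_mul ξ)).sub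
    (h0.const_mul ξ)).sub h1 |>.sub h2.id_mul).const_mul 2

end

theorem Cxi_symmetric
    (ξ : ℝ) (u v : ℝ → ℝ)
    (hu : ContDiff ℝ (⊤ : ℕ∞) u) (hv : ContDiff ℝ (⊤ : ℕ∞) v)
    (hud : ∀ n k : ℕ, ∃ C : ℝ, ∀ t : ℝ, 0 ≤ t → |t| ^ k * |iteratedDeriv n u t| ≤ C)
    (hvd : ∀ n k : ℕ, ∃ C : ℝ, ∀ t : ℝ, 0 ≤ t → |t| ^ k * |iteratedDeriv n v t| ≤ C) :
    ∫ t in Set.Ioi (0 : ℝ), Cxi ξ u t * v t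
      = ∫ t in Set.Ioi (0 : ℝ), u t * Cxi ξ v t := by
  have hu2 : ContDiff ℝ 2 u := hu.of_le (WithTop.coe_le_coe.mpr le_top)
  have hv2 : ContDiff ℝ 2 v := hv.of_le (WithTop.coe_le_coe.mpr le_top)
  have hU : ∀ n, RapidDecay (iteratedDeriv n u) := hud
  have hV : ∀ n, RapidDecay (iteratedDeriv n v) := hvd
  have hu0 : RapidDecay u := by simpa only [iteratedDeriv_zero] using hU 0
  have hv0 : RapidDecay v := by simpa only [iteratedDeriv_zero] using hV 0
  have hu1 : RapidDecay (deriv u) := by simpa only [iteratedDeriv_one] using hU 1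
  have hv1 : RapidDecay (deriv v) := by simpa only [iteratedDeriv_one] using hV 1
  have hCu : RapidDecay (Cxi ξ u) := rapidDecay_Cxi ξ hu0 hu1 (by
    simpa only [iteratedDeriv_succ, iteratedDeriv_zero] using hU 2)
  have hCv : RapidDecay (Cxi ξ v) := rapidDecay_Cxi ξ hv0 hv1 (by
    simpa only [iteratedDeriv_succ, iteratedDeriv_zero] using hV 2)
  have hint_u : IntegrableOn (fun t => Cxi ξ u t * v t) (Ioi 0) :=
    (hCu.mul hv0).integrableOn_Ioi ((continuous_Cxi ξ hu2).mul hv.continuous)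
  have hint_v : IntegrableOn (fun t => u t * Cxi ξ v t) (Ioi 0) :=
    (hu0.mul hCv).integrableOn_Ioi (hu.continuous.mul (continuous_Cxi ξ hv2))
  have hW : RapidDecay (wronskian u v) := (hu0.mul hv1).sub (hu1.mul hv0)
  rw [← sub_eq_zero, ← integral_sub hint_u hint_v]
  simpa using integral_Ioi_of_hasDerivAt_of_tendsto'
    (fun t _ => Cxi_lagrange_identity ξ hu2 hv2 t) (hint_u.sub hint_v)
    (hW.id_mul.const_mul 2).tendsto_atTop_zero
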